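/- Kemeny's constant is independent of the starting state: for an irreducible stochastic matrix P on finite S with stationary distribution π, the quantity Σ_{j∈S} m_{ij} π_j does not depend on i ∈ S. -/

import Mathlib

/-!
Write `F n i = P_i(T_j^+ > n)`. Grouping the paths that define `m_{ij}` by length gives
`m_{ij} = ∑ₙ F n i`, a series that converges geometrically because irreducibility makes
`F N < 1` uniformly for some `N`. Conditioning on the first step gives
`m_{ij} = 1 + ∑ₖ p_{ik} m_{kj} - p_{ij} m_{jj}`. Averaging these equations against `π` yields
Kac's formula `π_j m_{jj} = 1`; weighting them by `π_j` then shows that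
`K i = ∑ⱼ m_{ij} π_j` is `P`-harmonic, and a harmonic function of an irreducible chain is
constant by the maximum principle.
-/

open Finset

/-- A spanning forest of `S` with root set `R`, encoded as a successor function:
roots are fixed points, and every state eventually reaches `R` under iteration. -/
def IsForest {S : Type*} [Fintype S] [DecidableEq S] (R : Finset S) (f : S → S) : Prop :=
  (∀ i ∈ R, f i = i) ∧ ∀ i : S, ∃ n : ℕ, f^[n] i ∈ R

/-- The `P`-weight of a forest: product of transition probabilities over its directed edges. -/
noncomputable def forestWt {S : Type*} [Fintype S] [DecidableEq S]
    (p : S → S → ℝ) (R : Finset S) (f : S → S) : ℝ :=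
  ∏ i ∈ Rᶜ, p i (f i)

open Classical in
/-- `w p R`: the total `P`-weight of spanning forests with root set `R`. -/
noncomputable def w {S : Type*} [Fintype S] [DecidableEq S]
    (p : S → S → ℝ) (R : Finset S) : ℝ :=
  ∑ f : S → S, if IsForest R f then forestWt p R f else 0

open Classical in
/-- `wroot p A i j`: total weight of forests with root set `A` in which the tree
containing `i` has root `j`. -/
noncomputable def wroot {S : Type*} [Fintype S] [DecidableEq S]
    (p : S → S → ℝ) (A : Finset S) (i j : S) : ℝ :=
  ∑ f : S → S, if IsForest A f ∧ ∃ n : ℕ, f^[n] i = j then forestWt p A f else 0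

/-- `p` is a stochastic matrix. -/
def IsStochastic {S : Type*} [Fintype S] (p : S → S → ℝ) : Prop :=
  (∀ i j, 0 ≤ p i j) ∧ ∀ i, ∑ j, p i j = 1

/-- `p` is irreducible. -/
def PIrreducible {S : Type*} [Fintype S] [DecidableEq S] (p : S → S → ℝ) : Prop :=
  ∀ i j : S, ∃ n : ℕ, 0 < ((Matrix.of p) ^ n) i j

/-- Weight of a path starting at `i` with successive states given by the list. -/
def wt {S : Type*} (p : S → S → ℝ) : S → List S → ℝ
  | _, [] => 1
  | i, j :: l => p i j * wt p j l

/-- Mean first passage time `m_{ij} = E_i[T_j^+] = ∑_{n≥0} P_i(T_j^+ > n)`, expressed as the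
sum of weights of all finite paths from `i` avoiding `j`. -/
noncomputable def mfpt {S : Type*} [Fintype S] [DecidableEq S] (p : S → S → ℝ) (i j : S) : ℝ :=
  ∑' l : {l : List S // j ∉ l}, wt p i l.1

open Matrix

theorem wt_nonneg {S : Type*} {p : S → S → ℝ} (hp : ∀ a b, 0 ≤ p a b) (i : S) (l : List S) :
    0 ≤ wt p i l := by
  induction l generalizing i with
  | nil => exact zero_le_one
  | cons k t ih => exact mul_nonneg (hp i k) (ih k)

section Survival

variable {S : Type*} [Fintype S] [DecidableEq S] {p : S → S → ℝ}

theorem IsStochastic.mem_rowStochastic (hs : IsStochastic p) : Matrix.of p ∈ rowStochastic ℝ S :=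
  mem_rowStochastic_iff_sum.2 hs

/-- `survival p j n i` is the probability `P_i(T_j^+ > n)`. -/
noncomputable def survival (p : S → S → ℝ) (j : S) : ℕ → S → ℝ
  | 0 => fun _ => 1
  | n + 1 => fun i => ∑ k ∈ univ.erase j, p i k * survival p j n k

def avoidingLists (j : S) : ℕ → Finset (List S)
  | 0 => {[]}
  | n + 1 => (univ.erase j).biUnion fun k => (avoidingLists j n).image (k :: ·)

theorem mem_avoidingLists {j : S} {n : ℕ} {l : List S} :
    l ∈ avoidingLists j n ↔ l.length = n ∧ j ∉ l := by
  induction n generalizing l with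
  | zero => simp +contextual [avoidingLists, List.length_eq_zero_iff]
  | succ n ih =>
    cases l with
    | nil => simp [avoidingLists]
    | cons k t => simp [avoidingLists, ih, eq_comm (a := j), and_left_comm]

theorem sum_wt_avoidingLists (p : S → S → ℝ) (j i : S) (n : ℕ) :
    ∑ l ∈ avoidingLists j n, wt p i l = survival p j n i := by
  induction n generalizing i with
  | zero => simp [avoidingLists, survival, wt]
  | succ n ih =>
    rw [avoidingLists, sum_biUnion]
    · refine sum_congr rfl fun k _ => ?_
      rw [sum_image fun _ _ _ _ h => List.cons_injective h]
      simp only [wt, ← mul_sum, ih]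
    · intro a _ b _ hab
      simp only [Function.onFun, disjoint_left, mem_image]
      rintro _ ⟨t, -, rfl⟩ ⟨t', -, h⟩
      exact hab (List.cons_eq_cons.1 h).1.symm

theorem survival_nonneg (hp : ∀ a b, 0 ≤ p a b) (j : S) (n : ℕ) (i : S) :
    0 ≤ survival p j n i := by
  induction n generalizing i with
  | zero => exact zero_le_one
  | succ n ih => exact sum_nonneg fun k _ => mul_nonneg (hp i k) (ih k)

/-- The Markov property at time `m`. -/
theorem survival_add_le (hp : ∀ a b, 0 ≤ p a b) {j : S} {m : ℕ} {c : ℝ}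
    (hc : ∀ k, survival p j m k ≤ c) (n : ℕ) (i : S) :
    survival p j (m + n) i ≤ c * survival p j n i := by
  induction n generalizing i with
  | zero => simpa [survival] using hc i
  | succ n ih =>
    rw [← add_assoc, survival, survival, mul_sum]
    refine sum_le_sum fun k _ => ?_
    rw [mul_left_comm]
    exact mul_le_mul_of_nonneg_left (ih k) (hp i k)

theorem survival_one_le_one (hs : IsStochastic p) (j i : S) : survival p j 1 i ≤ 1 := by
  calc survival p j 1 i = ∑ k ∈ univ.erase j, p i k := by simp [survival]
    _ ≤ ∑ k, p i k := sum_le_sum_of_subset_of_nonneg (erase_subset j univ) fun k _ _ => hs.1 i k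
    _ = 1 := hs.2 i

theorem survival_antitone (hs : IsStochastic p) (j i : S) :
    Antitone fun n => survival p j n i := by
  refine antitone_nat_of_succ_le fun n => ?_
  simpa [add_comm] using survival_add_le hs.1 (survival_one_le_one hs j) n i

theorem survival_succ_add_pow_le_one (hs : IsStochastic p) (j : S) (n : ℕ) (i : S) :
    survival p j (n + 1) i + (Matrix.of p ^ (n + 1)) i j ≤ 1 := by
  have hP := hs.mem_rowStochastic
  induction n generalizing i with
  | zero => simp [survival, hs.2 i]
  | succ n ih =>
    calc survival p j (n + 2) i + (Matrix.of p ^ (n + 2)) i j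
        = ∑ k ∈ univ.erase j, p i k * (survival p j (n + 1) k + (Matrix.of p ^ (n + 1)) k j)
          + p i j * (Matrix.of p ^ (n + 1)) j j := by
          rw [survival, pow_succ', mul_apply, ← sum_erase_add _ _ (mem_univ j)]
          simp only [mul_add, sum_add_distrib, of_apply]
          ring
      _ ≤ ∑ k ∈ univ.erase j, p i k * 1 + p i j * 1 := by
          gcongr with k
          · exact hs.1 i k
          · exact ih k
          · exact hs.1 i j
          · exact le_one_of_mem_rowStochastic (pow_mem hP _)
      _ = 1 := by simp [hs.2 i]

theorem exists_pow_succ_pos (hs : IsStochastic p) (hirr : PIrreducible p) (i j : S) :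
    ∃ n, 0 < (Matrix.of p ^ (n + 1)) i j := by
  obtain ⟨k, -, hik⟩ : ∃ k ∈ univ, (0 : ℝ) < p i k :=
    exists_lt_of_sum_lt (by simp [hs.2 i])
  obtain ⟨n, hn⟩ := hirr k j
  refine ⟨n, ?_⟩
  rw [pow_succ', mul_apply]
  exact sum_pos' (fun l _ => mul_nonneg (hs.1 i l) (nonneg_of_mem_rowStochastic
    (pow_mem hs.mem_rowStochastic n))) ⟨k, mem_univ k, mul_pos hik hn⟩

theorem exists_survival_lt_one (hs : IsStochastic p) (hirr : PIrreducible p) (j : S) :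
    ∃ N, ∀ k, survival p j N k < 1 := by
  choose g hg using fun k => exists_pow_succ_pos hs hirr k j
  refine ⟨univ.sup fun k => g k + 1, fun k => ?_⟩
  calc survival p j _ k ≤ survival p j (g k + 1) k :=
        survival_antitone hs j k (le_sup (f := fun k => g k + 1) (mem_univ k))
    _ < 1 := by linarith [survival_succ_add_pow_le_one hs j (g k) k, hg k]

theorem survival_mul_le_pow (hp : ∀ a b, 0 ≤ p a b) {j : S} {N : ℕ} {c : ℝ}
    (hc : ∀ k, survival p j N k ≤ c) (q : ℕ) (i : S) :
    survival p j (q * N) i ≤ c ^ q := by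
  induction q generalizing i with
  | zero => simp [survival]
  | succ q ih =>
    have hc0 : 0 ≤ c := (survival_nonneg hp j N i).trans (hc i)
    rw [add_mul, one_mul, add_comm, pow_succ']
    exact (survival_add_le hp hc _ i).trans (mul_le_mul_of_nonneg_left (ih i) hc0)

theorem summable_survival (hs : IsStochastic p) (hirr : PIrreducible p) (j i : S) :
    Summable fun n => survival p j n i := by
  obtain ⟨N, hN⟩ := exists_survival_lt_one hs hirr j
  have : Nonempty S := ⟨i⟩
  obtain ⟨k₀, hk₀⟩ := Finite.exists_max (survival p j N)
  have : NeZero N := ⟨by rintro rfl; simpa [survival] using hN k₀⟩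
  rw [← (Nat.divModEquiv N).symm.summable_iff]
  refine Summable.of_nonneg_of_le (fun _ => survival_nonneg hs.1 j _ i) (fun x => ?_)
    ((summable_geometric_of_lt_one (survival_nonneg hs.1 j N k₀) (hN k₀)).mul_of_nonneg
      (Summable.of_finite (f := fun _ : Fin N => (1 : ℝ))) (fun _ => pow_nonneg
        (survival_nonneg hs.1 j N k₀) _) fun _ => zero_le_one)
  rw [Function.comp_apply, Nat.divModEquiv_symm_apply, mul_one]
  exact (survival_antitone hs j i (Nat.le_add_right _ _)).trans (survival_mul_le_pow hs.1 hk₀ _ i)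

def avoidingListsSigmaEquiv (j : S) :
    (Σ n, avoidingLists j n) ≃ {l : List S // j ∉ l} where
  toFun x := ⟨x.2, (mem_avoidingLists.1 x.2.2).2⟩
  invFun l := ⟨l.1.length, l.1, mem_avoidingLists.2 ⟨rfl, l.2⟩⟩
  left_inv := by
    rintro ⟨n, l, hl⟩
    obtain ⟨rfl, -⟩ := mem_avoidingLists.1 hl
    rfl
  right_inv _ := rfl

theorem hasSum_survival_mfpt (hs : IsStochastic p) (hirr : PIrreducible p) (i j : S) :
    HasSum (fun n => survival p j n i) (mfpt p i j) := by
  set e := avoidingListsSigmaEquiv j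
  have hfiber : ∀ n, HasSum (fun l : avoidingLists j n => wt p i l) (survival p j n i) :=
    fun n => sum_wt_avoidingLists p j i n ▸ Finset.hasSum _ _
  have hsum : Summable fun x => wt p i (e x).1 :=
    (summable_sigma_of_nonneg fun _ => wt_nonneg hs.1 i _).2
      ⟨fun _ => .of_finite, (summable_survival hs hirr j i).congr fun n => (hfiber n).tsum_eq.symm⟩
  rw [mfpt, ← e.tsum_eq]
  exact hsum.hasSum.sigma hfiber

theorem mfpt_eq_one_add_sum (hs : IsStochastic p) (hirr : PIrreducible p) (i j : S) :
    mfpt p i j = 1 + ∑ k, p i k * mfpt p k j - p i j * mfpt p j j := by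
  have hshift := (hasSum_nat_add_iff' 1).2 (hasSum_survival_mfpt hs hirr i j)
  have hstep : HasSum (fun n => survival p j (n + 1) i) (∑ k ∈ univ.erase j, p i k * mfpt p k j) :=
    hasSum_sum fun k _ => (hasSum_survival_mfpt hs hirr k j).mul_left (p i k)
  rw [add_sub_assoc, ← sum_erase_eq_sub (mem_univ j), ← hshift.unique hstep]
  simp [survival]

end Survival

section FirstStepEquations

variable {S : Type*} [Fintype S] {p m : S → S → ℝ} {π : S → ℝ}

/-- Kac's formula. -/
theorem stationary_mul_diag_eq_one
    (hm : ∀ i j, m i j = 1 + ∑ k, p i k * m k j - p i j * m j j)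
    (hπ1 : ∑ j, π j = 1) (hπ : ∀ j, ∑ i, π i * p i j = π j) (j : S) :
    π j * m j j = 1 := by
  have h : ∑ i, π i * m i j = 1 + ∑ k, π k * m k j - π j * m j j := by
    calc ∑ i, π i * m i j = ∑ i, π i * (1 + ∑ k, p i k * m k j - p i j * m j j) := by
          simp_rw [← hm]
      _ = ∑ i, π i + ∑ k, (∑ i, π i * p i k) * m k j - (∑ i, π i * p i j) * m j j := by
          simp only [mul_add, mul_sub, mul_one, sum_add_distrib, sum_sub_distrib, mul_sum,
            sum_mul, mul_assoc]
          rw [sum_comm]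
      _ = 1 + ∑ k, π k * m k j - π j * m j j := by simp only [hπ, hπ1]
  linarith

theorem mulVec_kemeny_eq_self
    (hm : ∀ i j, m i j = 1 + ∑ k, p i k * m k j - p i j * m j j)
    (hkac : ∀ j, π j * m j j = 1) (hπ1 : ∑ j, π j = 1) (hrow : ∀ i, ∑ k, p i k = 1) :
    Matrix.of p *ᵥ (fun i => ∑ j, m i j * π j) = fun i => ∑ j, m i j * π j := by
  funext i
  calc ∑ k, p i k * ∑ j, m k j * π j
      = ∑ j, π j + ∑ k, p i k * ∑ j, m k j * π j - ∑ j, p i j * (π j * m j j) := by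
        simp only [hkac, hπ1, hrow, mul_one]
        ring
    _ = ∑ j, (1 + ∑ k, p i k * m k j - p i j * m j j) * π j := by
        simp only [add_mul, sub_mul, one_mul, sum_add_distrib, sum_sub_distrib, mul_sum, sum_mul,
          mul_assoc, mul_comm (π _)]
        rw [sum_comm (γ := S)]
    _ = ∑ j, m i j * π j := by simp_rw [← hm]

end FirstStepEquations

section MaximumPrinciple

variable {S : Type*} [Fintype S] [DecidableEq S]

theorem apply_eq_of_mulVec_eq_self {A : Matrix S S ℝ} (hA : A ∈ rowStochastic ℝ S) {h : S → ℝ}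
    (hh : A *ᵥ h = h) {i k : S} (hmax : ∀ l, h l ≤ h i) (hik : 0 < A i k) : h k = h i := by
  by_contra hne
  have hlt : h k < h i := lt_of_le_of_ne (hmax k) hne
  have : h i < h i :=
    calc h i = ∑ l, A i l * h l := (congrFun hh i).symm
      _ < ∑ l, A i l * h i := sum_lt_sum (fun l _ => mul_le_mul_of_nonneg_left (hmax l)
          (nonneg_of_mem_rowStochastic hA)) ⟨k, mem_univ k, mul_lt_mul_of_pos_left hlt hik⟩
      _ = h i := by rw [← sum_mul, sum_row_of_mem_rowStochastic hA, one_mul]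
  exact this.false

theorem PIrreducible.eq_of_mulVec_eq_self {p : S → S → ℝ} (hirr : PIrreducible p)
    (hs : IsStochastic p) {h : S → ℝ} (hh : Matrix.of p *ᵥ h = h) (i i' : S) : h i = h i' := by
  have : Nonempty S := ⟨i⟩
  obtain ⟨i₀, hmax⟩ := Finite.exists_max h
  have hpow : ∀ n, (Matrix.of p ^ n) *ᵥ h = h := by
    intro n
    induction n with
    | zero => exact one_mulVec h
    | succ n ih => rw [pow_succ, ← mulVec_mulVec, hh, ih]
  have hconst : ∀ k, h k = h i₀ := fun k => by
    obtain ⟨n, hn⟩ := hirr i₀ k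
    exact apply_eq_of_mulVec_eq_self (pow_mem hs.mem_rowStochastic n) (hpow n) hmax hn
  rw [hconst i, hconst i']

end MaximumPrinciple

theorem kemeny_constant_indep_general {S : Type*} [Fintype S] [DecidableEq S]
    (p : S → S → ℝ) (hs : IsStochastic p) (hirr : PIrreducible p)
    (π : S → ℝ) (hπ1 : ∑ j : S, π j = 1)
    (hπ : ∀ j : S, ∑ i : S, π i * p i j = π j) :
    ∀ i i' : S, ∑ j : S, mfpt p i j * π j = ∑ j : S, mfpt p i' j * π j := by
  have hm := mfpt_eq_one_add_sum hs hirr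
  have hkac := stationary_mul_diag_eq_one hm hπ1 hπ
  exact hirr.eq_of_mulVec_eq_self hs (mulVec_kemeny_eq_self hm hkac hπ1 hs.2)

/-- Kemeny's constant `∑_j m_{ij} π_j` does not depend on the starting state `i`. -/
theorem kemeny_constant_indep {S : Type*} [Fintype S] [DecidableEq S]
    (p : S → S → ℝ) (hs : IsStochastic p) (hirr : PIrreducible p)
    (π : S → ℝ) (hπ0 : ∀ j, 0 ≤ π j) (hπ1 : ∑ j : S, π j = 1)
    (hπ : ∀ j : S, ∑ i : S, π i * p i j = π j) :
    ∀ i i' : S, ∑ j : S, mfpt p i j * π j = ∑ j : S, mfpt p i' j * π j :=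
  kemeny_constant_indep_general p hs hirr π hπ1 hπ
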